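/- arXiv:gr-qc/0005031 — 2 statements merged into one kernel-verified Lean document; each statement's English description precedes it below -/
import Mathlib

section
/- Let T > 0 and let θ : ℝ → ℝ be differentiable at every point of [0, T) with θ(0) < 0 and θ'(λ) ≤ -θ(λ)²/2 for all λ ∈ [0, T). Then θ(λ) < 0 for all λ ∈ [0, T), the function λ ↦ 2/(-θ(λ)) has derivative ≤ -1 at every point of [0, T), and consequently 2/(-θ(λ)) ≤ 2/(-θ(0)) - λ for all λ ∈ [0, T). -/
/-- If `θ` is differentiable at every point of `[0, T)` with `θ 0 < 0` and
`θ' λ ≤ -θ(λ)²/2` on `[0, T)`, then `θ` stays negative on `[0, T)`, the function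
`λ ↦ 2/(-θ λ)` has derivative `≤ -1` at every point of `[0, T)`, and consequently
`2/(-θ λ) ≤ 2/(-θ 0) - λ` for all `λ ∈ [0, T)`. -/
theorem raychaudhuri_reciprocal_derivative_bound
    (T : ℝ) (hT : 0 < T) (θ θ' : ℝ → ℝ)
    (hderiv : ∀ x ∈ Set.Ico (0 : ℝ) T, HasDerivWithinAt θ (θ' x) (Set.Ico (0 : ℝ) T) x)
    (hineq : ∀ x ∈ Set.Ico (0 : ℝ) T, θ' x ≤ -(θ x) ^ 2 / 2)
    (h0 : θ 0 < 0) :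
    (∀ x ∈ Set.Ico (0 : ℝ) T, θ x < 0) ∧
    (∀ x ∈ Set.Ico (0 : ℝ) T, ∃ d : ℝ, d ≤ -1 ∧
      HasDerivWithinAt (fun y => 2 / (-θ y)) d (Set.Ico (0 : ℝ) T) x) ∧
    (∀ x ∈ Set.Ico (0 : ℝ) T, 2 / (-θ x) ≤ 2 / (-θ 0) - x) := by
  set D : Set ℝ := Set.Ico (0 : ℝ) T with hD
  have hDconv : Convex ℝ D := convex_Ico 0 T
  have hint : interior D = Set.Ioo (0 : ℝ) T := interior_Ico
  have h0mem : (0 : ℝ) ∈ D := ⟨le_refl 0, hT⟩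
  -- interior points: HasDerivAt
  have hDA : ∀ x ∈ interior D, HasDerivAt θ (θ' x) x := by
    intro x hx
    rw [hint] at hx
    have : D ∈ nhds x := by
      rw [hD]
      exact Ico_mem_nhds hx.1 hx.2
    exact ((hderiv x ⟨le_of_lt hx.1, hx.2⟩).hasDerivAt this)
  have hcont : ContinuousOn θ D := fun x hx =>
    (hderiv x hx).continuousWithinAt
  have hdiffint : DifferentiableOn ℝ θ (interior D) := fun x hx =>
    ((hDA x hx).differentiableAt).differentiableWithinAt
  have hderle : ∀ x ∈ interior D, deriv θ x ≤ 0 := by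
    intro x hx
    rw [(hDA x hx).deriv]
    have hx' : x ∈ D := by rw [hint] at hx; exact ⟨le_of_lt hx.1, hx.2⟩
    have := hineq x hx'
    nlinarith [sq_nonneg (θ x)]
  -- θ stays negative
  have hneg : ∀ x ∈ D, θ x < 0 := by
    intro x hx
    have := hDconv.image_sub_le_mul_sub_of_deriv_le hcont hdiffint hderle 0 h0mem x hx hx.1
    simpa using by linarith
  -- derivative of 2/(-θ)
  have hg : ∀ x ∈ D, HasDerivWithinAt (fun y => 2 / (-θ y))
      (2 * (θ' x / θ x ^ 2)) D x := by
    intro x hx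
    have hne : -θ x ≠ 0 := by have := hneg x hx; intro h; linarith [neg_eq_zero.mp h]
    have h1 : HasDerivWithinAt (fun y => (-θ y)⁻¹) (-(-θ' x) / (-θ x) ^ 2) D x :=
      ((hderiv x hx).neg).inv hne
    have h2 := h1.const_mul (2 : ℝ)
    have : (2 : ℝ) * (-(-θ' x) / (-θ x) ^ 2) = 2 * (θ' x / θ x ^ 2) := by
      ring
    rw [this] at h2
    simpa [div_eq_mul_inv] using h2
  have hdle : ∀ x ∈ D, 2 * (θ' x / θ x ^ 2) ≤ -1 := by
    intro x hx
    have hθ := hneg x hx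
    have hsq : 0 < θ x ^ 2 := by nlinarith
    have h1 := hineq x hx
    have h2 : 2 * (θ' x / θ x ^ 2) = (2 * θ' x) / θ x ^ 2 := by ring
    rw [h2, div_le_iff₀ hsq]
    nlinarith
  refine ⟨hneg, fun x hx => ⟨_, hdle x hx, hg x hx⟩, ?_⟩
  -- final inequality
  intro x hx
  have hcontg : ContinuousOn (fun y => 2 / (-θ y)) D := fun y hy =>
    (hg y hy).continuousWithinAt
  have hdiffg : DifferentiableOn ℝ (fun y => 2 / (-θ y)) (interior D) := by
    intro y hy
    have hy' : y ∈ D := by rw [hint] at hy; exact ⟨le_of_lt hy.1, hy.2⟩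
    have hmem : D ∈ nhds y := by rw [hD, hint] at *; exact Ico_mem_nhds hy.1 hy.2
    exact ((hg y hy').hasDerivAt hmem).differentiableAt.differentiableWithinAt
  have hgder : ∀ y ∈ interior D, deriv (fun y => 2 / (-θ y)) y ≤ -1 := by
    intro y hy
    have hy' : y ∈ D := by rw [hint] at hy; exact ⟨le_of_lt hy.1, hy.2⟩
    have hmem : D ∈ nhds y := by rw [hD, hint] at *; exact Ico_mem_nhds hy.1 hy.2
    rw [((hg y hy').hasDerivAt hmem).deriv]
    exact hdle y hy'
  have := hDconv.image_sub_le_mul_sub_of_deriv_le hcontg hdiffg hgder 0 h0mem x hx hx.1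
  linarith
end

section
/- Let θ₀ < 0, set λ₀ := 2/(-θ₀), and let θ : ℝ → ℝ be differentiable at every point of [0, λ₀) with θ(0) = θ₀ and θ'(λ) ≤ -θ(λ)²/2 for all λ ∈ [0, λ₀). Then θ(λ) tends to -∞ as λ tends to λ₀ from the left. -/
open Filter

/-- Blow-up of the expansion: if `θ₀ < 0`, `l₀ = 2/(-θ₀)`, `θ` is differentiable at every
point of `[0, l₀)` with `θ 0 = θ₀` and satisfies the Raychaudhuri inequality
`θ' ≤ -θ²/2` there, then `θ(λ) → -∞` as `λ → l₀⁻`. -/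
theorem raychaudhuri_blow_up
    (θ₀ : ℝ) (hθ₀ : θ₀ < 0) (l₀ : ℝ) (hl₀ : l₀ = 2 / (-θ₀)) (θ θ' : ℝ → ℝ)
    (hderiv : ∀ x ∈ Set.Ico (0 : ℝ) l₀, HasDerivWithinAt θ (θ' x) (Set.Ico (0 : ℝ) l₀) x)
    (hineq : ∀ x ∈ Set.Ico (0 : ℝ) l₀, θ' x ≤ -(θ x) ^ 2 / 2)
    (h0 : θ 0 = θ₀) :
    Tendsto θ (nhdsWithin l₀ (Set.Iio l₀)) atBot := by
  have hl₀pos : 0 < l₀ := by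
    have h := neg_pos.mpr hθ₀
    rw [hl₀]; positivity
  set s : Set ℝ := Set.Ico (0 : ℝ) l₀ with hs
  have hconv : Convex ℝ s := convex_Ico 0 l₀
  have hint : interior s = Set.Ioo (0 : ℝ) l₀ := interior_Ico
  have hcont : ContinuousOn θ s := fun x hx => (hderiv x hx).continuousWithinAt
  -- θ antitone on s
  have hanti : AntitoneOn θ s := by
    apply antitoneOn_of_hasDerivWithinAt_nonpos hconv hcont
    · intro x hx
      rw [hint] at hx ⊢
      exact (hderiv x (Set.Ioo_subset_Ico_self hx)).mono Set.Ioo_subset_Ico_self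
    · intro x hx
      rw [hint] at hx
      refine (hineq x (Set.Ioo_subset_Ico_self hx)).trans ?_
      nlinarith [sq_nonneg (θ x)]
  -- θ x ≤ θ₀ < 0 on s
  have hneg : ∀ x ∈ s, θ x ≤ θ₀ := by
    intro x hx
    have h0s : (0 : ℝ) ∈ s := ⟨le_refl 0, hl₀pos⟩
    have := hanti h0s hx hx.1
    rwa [h0] at this
  -- g = 1/θ - x/2 is monotone on s
  set g : ℝ → ℝ := fun x => (θ x)⁻¹ - x / 2 with hg
  have hgmono : MonotoneOn g s := by
    apply monotoneOn_of_hasDerivWithinAt_nonneg hconv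
      (f' := fun x => -θ' x / (θ x) ^ 2 - 1 / 2)
    · exact (hcont.inv₀ (fun x hx => ((hneg x hx).trans_lt hθ₀).ne)).sub
        (continuousOn_id.div_const 2)
    · intro x hx
      rw [hint] at hx ⊢
      have hxs : x ∈ s := Set.Ioo_subset_Ico_self hx
      have hne : θ x ≠ 0 := ((hneg x hxs).trans_lt hθ₀).ne
      have h1 : HasDerivWithinAt (fun x => (θ x)⁻¹) (-θ' x / (θ x) ^ 2)
          (Set.Ioo (0:ℝ) l₀) x :=
        ((hderiv x hxs).mono Set.Ioo_subset_Ico_self).inv hne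
      exact h1.sub ((hasDerivWithinAt_id x _).div_const 2)
    · intro x hx
      rw [hint] at hx
      have hxs : x ∈ s := Set.Ioo_subset_Ico_self hx
      have hne : θ x ≠ 0 := ((hneg x hxs).trans_lt hθ₀).ne
      have hsq : 0 < (θ x) ^ 2 := by positivity
      have := hineq x hxs
      rw [sub_nonneg, div_le_div_iff₀ (by norm_num) hsq]
      nlinarith
  -- bound: θ x ≤ 2 / (x - l₀) for x ∈ s
  have hθ₀' : θ₀ = -2 / l₀ := by
    rw [hl₀]; field_simp
  have hbound : ∀ x ∈ s, θ x ≤ 2 / (x - l₀) := by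
    intro x hx
    have h0s : (0 : ℝ) ∈ s := ⟨le_refl 0, hl₀pos⟩
    have hmono := hgmono h0s hx hx.1
    have hg0 : g 0 = θ₀⁻¹ := by simp [hg, h0]
    have hθ₀inv : θ₀⁻¹ = -(l₀/2) := by
      rw [hθ₀']; field_simp
    have hkey : (x - l₀) / 2 ≤ (θ x)⁻¹ := by
      have h' := hmono
      simp only [hg] at h'
      rw [h0, hθ₀inv] at h'
      linarith
    have hxneg : θ x < 0 := (hneg x hx).trans_lt hθ₀
    rw [le_div_iff_of_neg (by linarith [hx.2] : x - l₀ < 0)]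
    have hmul := mul_le_mul_of_nonpos_left hkey hxneg.le
    have hcan : θ x * (θ x)⁻¹ = 1 := mul_inv_cancel₀ hxneg.ne
    nlinarith
  -- conclude
  have hev : ∀ᶠ x in nhdsWithin l₀ (Set.Iio l₀), θ x ≤ 2 / (x - l₀) := by
    filter_upwards [eventually_nhdsWithin_of_eventually_nhds
      (eventually_gt_nhds hl₀pos), self_mem_nhdsWithin] with x hx0 hxl
    exact hbound x ⟨hx0.le, hxl⟩
  refine tendsto_atBot_mono' _ hev ?_
  have h1 : Tendsto (fun x => l₀ - x) (nhdsWithin l₀ (Set.Iio l₀))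
      (nhdsWithin 0 (Set.Ioi 0)) := by
    apply tendsto_nhdsWithin_of_tendsto_nhds_of_eventually_within
    · have h' : Tendsto (fun x : ℝ => l₀ - x) (nhds l₀) (nhds (l₀ - l₀)) :=
        (continuous_const.sub continuous_id).tendsto l₀
      simpa using h'.mono_left nhdsWithin_le_nhds
    · filter_upwards [self_mem_nhdsWithin] with x hx
      exact Set.mem_Ioi.mpr (by simp at hx ⊢; linarith)
  have h2 : Tendsto (fun x => 2 / (x - l₀)) (nhdsWithin l₀ (Set.Iio l₀)) atBot := by
    have h3 : Tendsto (fun x => (l₀ - x)⁻¹) (nhdsWithin l₀ (Set.Iio l₀)) atTop :=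
      tendsto_inv_nhdsGT_zero.comp h1
    have h4 : Tendsto (fun x => -(2 * (l₀ - x)⁻¹)) (nhdsWithin l₀ (Set.Iio l₀)) atBot :=
      tendsto_neg_atTop_atBot.comp (h3.const_mul_atTop (by norm_num : (0:ℝ) < 2))
    refine h4.congr' ?_
    filter_upwards [self_mem_nhdsWithin] with x hx
    rw [div_eq_mul_inv, show x - l₀ = -(l₀ - x) by ring, inv_neg]
    ring
  exact h2
end
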